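/- Let k be an odd integer. Consider n = k(k+3)/2 uniform-size items, (k²+4k−1)/4 white and (k+1)²/4 black, with per-bin capacity κ = k items. Then: (a) there is a feasible packing into (k+1)/2 + 1 bins, and no feasible packing uses fewer bins; (b) the packing consisting of (k+1)/2 full bins each with (k−1)/2 white and (k+1)/2 black items (alternating with black at bottom and top), plus k singleton bins each holding one white item, is a Nash equilibrium using (3k+1)/2 bins. -/

import Mathlib

open Finset

/-- In a uniform-size game, a bin (list of item indices, bottom to top) is
feasible if no two adjacent items share a color and it holds at most `κ` items. -/
def UBinOK {n : ℕ} {C : Type*} (color : Fin n → C) (κ : ℕ) (b : List (Fin n)) : Prop :=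
  (b.map color).Chain' (· ≠ ·) ∧ b.length ≤ κ

/-- A strategy profile is a packing if every item occurs in exactly one bin, once. -/
def IsPacking {n : ℕ} (σ : Fin n → List (Fin n)) : Prop :=
  ∀ i : Fin n, (∑ j : Fin n, ((σ j).count i)) = 1

/-- The number of open (nonempty) bins of a profile. -/
def openBins {n : ℕ} (σ : Fin n → List (Fin n)) : ℕ :=
  (Finset.univ.filter fun j => σ j ≠ []).card

/-- Nash equilibrium of a uniform-size colorful bin packing game (the
egalitarian and proportional cost functions coincide): the profile is a feasible
packing and no item in a bin with `k` items can move to the top of another bin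
feasibly holding it with at least `k` items. -/
def UNE {n : ℕ} {C : Type*} (color : Fin n → C) (κ : ℕ)
    (σ : Fin n → List (Fin n)) : Prop :=
  IsPacking σ ∧ (∀ j, UBinOK color κ (σ j)) ∧
    ∀ (i : Fin n) (j j' : Fin n), j ≠ j' → i ∈ σ j →
      UBinOK color κ (σ j' ++ [i]) → (σ j').length < (σ j).length

/-!
Write `k = 2r + 1`: there are `N = (r + 2)(2r + 1)` items, and the `(r + 1)²` items of smallest
index are black. Since `N > (r + 1)k`, every feasible packing opens at least `r + 2` bins, and
`r + 2` full alternating bins suffice: one with `r + 1` black items and `r + 1` with `r + 1` white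
items. In the equilibrium, `r + 1` full bins take `r + 1` black and `r` white items each, and the
`2r + 1` remaining white items stay alone: a full bin accepts nothing, and a white item cannot be
put on top of another white singleton.
-/

lemma sum_univ_getD {α M : Type*} [AddCommMonoid M] (f : List α → M) (hf : f [] = 0) :
    ∀ {n : ℕ} (L : List (List α)), L.length ≤ n → ∑ j : Fin n, f (L.getD j []) = (L.map f).sum
  | _, [], _ => by simp [hf]
  | 0, _ :: _, h => by simp at h
  | n + 1, l :: L, h => by
    simp only [Fin.sum_univ_succ, Fin.val_zero, Fin.val_succ, List.getD_cons_zero,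
      List.getD_cons_succ, sum_univ_getD f hf L (Nat.le_of_succ_le_succ h), List.map_cons,
      List.sum_cons]

section Profiles

variable {n : ℕ}

lemma IsPacking.sum_length {σ : Fin n → List (Fin n)} (hσ : IsPacking σ) :
    ∑ j, (σ j).length = n := by
  calc ∑ j, (σ j).length = ∑ j, ∑ i, (σ j).count i := by
        simp [← Multiset.coe_count, Multiset.sum_count_eq_card]
    _ = ∑ i, ∑ j, (σ j).count i := Finset.sum_comm
    _ = n := by simp [hσ _]

lemma IsPacking.le_openBins_mul {σ : Fin n → List (Fin n)} {κ : ℕ} (hσ : IsPacking σ)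
    (hκ : ∀ j, (σ j).length ≤ κ) : n ≤ openBins σ * κ :=
  calc n = ∑ j, (σ j).length := hσ.sum_length.symm
    _ = ∑ j with σ j ≠ [], (σ j).length :=
        (Finset.sum_filter_of_ne fun j _ h => by simpa using h).symm
    _ ≤ openBins σ * κ := Finset.sum_le_card_nsmul _ _ κ fun j _ => hκ j

lemma ubinOK_nil {C : Type*} (color : Fin n → C) (κ : ℕ) : UBinOK color κ [] :=
  ⟨List.isChain_nil, Nat.zero_le κ⟩

lemma UNE_of_forall_full_or_singleton {C : Type*} {color : Fin n → C} {κ : ℕ} (c : C)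
    {σ : Fin n → List (Fin n)} (hσ : IsPacking σ) (hfeas : ∀ j, UBinOK color κ (σ j))
    (hshape : ∀ j, σ j = [] ∨ (σ j).length = κ ∨ ∃ i, σ j = [i] ∧ color i = c) :
    UNE color κ σ := by
  refine ⟨hσ, hfeas, fun i j j' _ hi hmove => ?_⟩
  have hcap := hmove.2
  rw [List.length_append, List.length_singleton] at hcap
  rcases hshape j with hj | hfull | ⟨i₀, hj, hi₀⟩
  · simp [hj] at hi
  · omega
  · obtain rfl : i = i₀ := by simpa [hj] using hi
    rcases hshape j' with hj' | hfull' | ⟨i', hj', hi'⟩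
    · simp [hj, hj']
    · omega
    · rw [hj'] at hmove
      exact absurd (hi'.trans hi₀.symm) (List.isChain_pair.1 hmove.1)

def profileOfLists (n : ℕ) [NeZero n] (L : List (List ℕ)) (j : Fin n) : List (Fin n) :=
  (L.getD j []).map (Fin.ofNat n)

variable [NeZero n] {L : List (List ℕ)}

lemma map_ofNat_range : (List.range n).map (Fin.ofNat n) = List.finRange n :=
  List.ext_getElem (by simp) fun i hi _ => by
    simp only [List.length_map, List.length_range] at hi
    simp [Fin.ext_iff, Nat.mod_eq_of_lt hi]

lemma ubinOK_map_ofNat {C : Type*} {color : Fin n → C} {κ : ℕ} {l : List ℕ} :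
    UBinOK color κ (l.map (Fin.ofNat n)) ↔
      (l.map fun x => color (Fin.ofNat n x)).IsChain (· ≠ ·) ∧ l.length ≤ κ := by
  rw [UBinOK, List.map_map, List.length_map]
  rfl

lemma apply_ofNat_of_forall_eq_decide {color : Fin n → Bool} {B : ℕ}
    (hcolor : ∀ i, color i = decide (i.val < B)) {x : ℕ} (hx : x < n) :
    color (Fin.ofNat n x) = decide (x < B) := by
  rw [hcolor, Fin.val_ofNat, Nat.mod_eq_of_lt hx]

lemma isPacking_profileOfLists (hlen : L.length ≤ n) (hL : L.flatten.Perm (List.range n)) :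
    IsPacking (profileOfLists n L) := fun i =>
  calc ∑ j, (profileOfLists n L j).count i = (L.map fun l => (l.map (Fin.ofNat n)).count i).sum :=
        sum_univ_getD (fun l => (l.map (Fin.ofNat n)).count i) rfl L hlen
    _ = (L.flatten.map (Fin.ofNat n)).count i := by
        rw [List.map_flatten, List.count_flatten, List.map_map]; rfl
    _ = 1 := by rw [(hL.map _).count_eq, map_ofNat_range, List.count_finRange]

lemma openBins_profileOfLists (hlen : L.length ≤ n) (hne : [] ∉ L) :
    openBins (profileOfLists n L) = L.length := by
  rw [openBins, Finset.card_filter]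
  calc ∑ j, (if profileOfLists n L j ≠ [] then 1 else 0)
      = ∑ j : Fin n, (fun l => if l ≠ [] then 1 else 0) (L.getD j []) := by simp [profileOfLists]
    _ = (L.map fun l => if l ≠ [] then 1 else 0).sum :=
        sum_univ_getD (fun l => if l ≠ [] then 1 else 0) (by simp) L hlen
    _ = L.length := by
        rw [List.map_congr_left fun l hl => if_pos (ne_of_mem_of_not_mem hl hne)]
        simp

lemma profileOfLists_eq_nil_or (j : Fin n) :
    profileOfLists n L j = [] ∨ ∃ l ∈ L, profileOfLists n L j = l.map (Fin.ofNat n) := by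
  rw [profileOfLists]
  rcases lt_or_ge j.val L.length with h | h
  · exact Or.inr ⟨_, List.getElem_mem h, by rw [List.getD_eq_getElem _ _ h]⟩
  · exact Or.inl (by rw [List.getD_eq_default _ _ h, List.map_nil])

end Profiles

def alternating (a b : ℕ) : ℕ → List ℕ
  | 0 => []
  | n + 1 => a :: alternating b (a + 1) n

@[simp]
lemma length_alternating (a b n : ℕ) : (alternating a b n).length = n := by
  induction n generalizing a b with
  | zero => rfl
  | succ n ih => simp [alternating, ih]

lemma alternating_perm (a b n : ℕ) :
    (alternating a b n).Perm (List.range' a ((n + 1) / 2) ++ List.range' b (n / 2)) := by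
  induction n generalizing a b with
  | zero => simp [alternating]
  | succ n ih =>
    rw [alternating, show (n + 1 + 1) / 2 = n / 2 + 1 by omega, List.range'_succ, List.cons_append]
    exact ((ih b (a + 1)).trans List.perm_append_comm).cons a

lemma alternating_odd_perm (a b p : ℕ) :
    (alternating a b (2 * p + 1)).Perm (List.range' a (p + 1) ++ List.range' b p) := by
  simpa [show (2 * p + 1 + 1) / 2 = p + 1 by omega, show (2 * p + 1) / 2 = p by omega]
    using alternating_perm a b (2 * p + 1)

lemma isChain_map_alternating (c : ℕ → Bool) (a b n : ℕ) (cA : Bool)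
    (ha : ∀ x ∈ List.range' a ((n + 1) / 2), c x = cA)
    (hb : ∀ x ∈ List.range' b (n / 2), c x = !cA) :
    ((alternating a b n).map c).IsChain (· ≠ ·) := by
  induction n generalizing a b cA with
  | zero => simp [alternating]
  | succ n ih =>
    have hca : c a = cA := ha a (by simp [List.mem_range'_1])
    have htail := ih b (a + 1) (!cA) (fun x hx => hb x (by simpa [List.mem_range'_1] using hx))
      (fun x hx => by rw [Bool.not_not]; exact ha x (by simp [List.mem_range'_1] at hx ⊢; omega))
    rcases n with _ | n
    · simp [alternating]
    · rw [alternating, List.map_cons]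
      rw [alternating, List.map_cons] at htail ⊢
      refine List.isChain_cons_cons.2 ⟨?_, htail⟩
      rw [hca, hb b (by simp [List.mem_range'_1])]
      exact Bool.not_ne_self cA |>.symm

lemma head?_alternating (a b n : ℕ) : (alternating a b (n + 1)).head? = some a := rfl

lemma getLast?_alternating (a b n : ℕ) : (alternating a b (2 * n + 1)).getLast? = some (a + n) := by
  induction n generalizing a b with
  | zero => rfl
  | succ n ih =>
    rw [show 2 * (n + 1) + 1 = 2 * n + 1 + 1 + 1 by ring, alternating, alternating,
      List.getLast?_cons_cons, List.getLast?_cons, ih, Option.getD_some]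
    exact congrArg some (by omega)

lemma flatten_alternating_perm (a b p m : ℕ) :
    ((List.range m).map fun j => alternating (a + j * (p + 1)) (b + j * p) (2 * p + 1)).flatten.Perm
      (List.range' a (m * (p + 1)) ++ List.range' b (m * p)) := by
  induction m with
  | zero => simp
  | succ m ih =>
    rw [List.range_succ, List.map_append, List.flatten_append, List.map_singleton,
      List.flatten_singleton, Nat.add_one_mul m (p + 1), Nat.add_one_mul m p,
      ← List.range'_append_1 (m := m * (p + 1)), ← List.range'_append_1 (m := m * p)]
    refine (ih.append (alternating_odd_perm _ _ p)).trans ?_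
    simp only [List.perm_iff_count, List.count_append]
    omega

lemma count_range'_eq_ite (x s n : ℕ) :
    (List.range' s n).count x = if s ≤ x ∧ x < s + n then 1 else 0 := by
  split_ifs with h
  · exact List.count_eq_one_of_mem List.nodup_range' (List.mem_range'_1.2 h)
  · exact List.count_eq_zero_of_not_mem (mt List.mem_range'_1.1 h)

lemma isChain_map_alternating_odd (c : ℕ → Bool) {a b p : ℕ} (cA : Bool)
    (ha : ∀ x ∈ List.range' a (p + 1), c x = cA) (hb : ∀ x ∈ List.range' b p, c x = !cA) :
    ((alternating a b (2 * p + 1)).map c).IsChain (· ≠ ·) :=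
  isChain_map_alternating c a b _ cA (by rwa [show (2 * p + 1 + 1) / 2 = p + 1 by omega])
    (by rwa [show (2 * p + 1) / 2 = p by omega])

lemma alternating_odd_shape {c : ℕ → Bool} {a b p : ℕ}
    (ha : ∀ x ∈ List.range' a (p + 1), c x = true) (hb : ∀ x ∈ List.range' b p, c x = false) :
    ((alternating a b (2 * p + 1)).map c).IsChain (· ≠ ·) ∧
      (alternating a b (2 * p + 1)).countP c = p + 1 ∧
      (alternating a b (2 * p + 1)).head?.map c = some true ∧
      (alternating a b (2 * p + 1)).getLast?.map c = some true := by
  refine ⟨isChain_map_alternating_odd c true ha hb, ?_, ?_, ?_⟩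
  · rw [(alternating_odd_perm a b p).countP_eq, List.countP_append, List.countP_eq_length.2 ha,
      List.countP_eq_zero.2 (by simpa using hb), List.length_range', Nat.add_zero]
  · rw [head?_alternating, Option.map_some, ha a (by simp [List.mem_range'_1])]
  · rw [getLast?_alternating, Option.map_some, ha _ (by simp [List.mem_range'_1])]

/-- Bins of item indices for `k = 2r + 1`; the items `x < (r + 1)²` are the black ones. -/
def equilibriumBins (r : ℕ) : List (List ℕ) :=
  (List.range (r + 1)).map (fun j => alternating (j * (r + 1)) ((r + 1) ^ 2 + j * r) (2 * r + 1)) ++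
    (List.range' ((r + 1) ^ 2 + (r + 1) * r) (2 * r + 1)).map fun x => [x]

def optimalBins (r : ℕ) : List (List ℕ) :=
  alternating ((r + 1) * r) (2 * (r + 1) ^ 2) (2 * r + 1) ::
    (List.range (r + 1)).map fun j => alternating ((r + 1) ^ 2 + j * (r + 1)) (j * r) (2 * r + 1)

lemma length_equilibriumBins (r : ℕ) : (equilibriumBins r).length = 3 * r + 2 := by
  simp only [equilibriumBins, List.length_append, List.length_map, List.length_range,
    List.length_range']
  omega

lemma length_optimalBins (r : ℕ) : (optimalBins r).length = r + 2 := by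
  simp [optimalBins]

lemma flatten_equilibriumBins_perm (r : ℕ) :
    (equilibriumBins r).flatten.Perm (List.range ((r + 2) * (2 * r + 1))) := by
  have hsingletons (l : List ℕ) : (l.map fun x => [x]).flatten = l := by
    rw [← List.flatMap_def, List.flatMap_singleton']
  rw [equilibriumBins, List.flatten_append, hsingletons]
  refine (List.Perm.append_right _
    (by simpa using flatten_alternating_perm 0 ((r + 1) ^ 2) r (r + 1))).trans ?_
  rw [List.perm_iff_count]
  intro x
  simp only [List.count_append, count_range'_eq_ite, List.range_eq_range']
  ring_nf
  split_ifs <;> omega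

lemma flatten_optimalBins_perm (r : ℕ) :
    (optimalBins r).flatten.Perm (List.range ((r + 2) * (2 * r + 1))) := by
  rw [optimalBins, List.flatten_cons]
  refine ((alternating_odd_perm _ _ r).append
    (by simpa using flatten_alternating_perm ((r + 1) ^ 2) 0 r (r + 1))).trans ?_
  rw [List.perm_iff_count]
  intro x
  simp only [List.count_append, count_range'_eq_ite, List.range_eq_range']
  ring_nf
  split_ifs <;> omega

section Colouring

variable {r : ℕ} {c : ℕ → Bool} (hc : ∀ x < (r + 2) * (2 * r + 1), c x = decide (x < (r + 1) ^ 2))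
include hc

lemma eq_true_of_lt_sq {x : ℕ} (hx : x < (r + 1) ^ 2) : c x = true := by
  rw [hc x (by nlinarith), decide_eq_true_iff]
  exact hx

lemma eq_false_of_sq_le {x : ℕ} (h₁ : (r + 1) ^ 2 ≤ x) (h₂ : x < (r + 2) * (2 * r + 1)) :
    c x = false := by
  rw [hc x h₂, decide_eq_false_iff_not]
  omega

lemma mem_equilibriumBins {l : List ℕ} (hl : l ∈ equilibriumBins r) :
    (l.length = 2 * r + 1 ∧ (l.map c).IsChain (· ≠ ·) ∧ l.countP c = r + 1 ∧
        l.head?.map c = some true ∧ l.getLast?.map c = some true) ∨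
      ∃ x, l = [x] ∧ c x = false := by
  rcases List.mem_append.1 hl with hl | hl
  · obtain ⟨j, hj, rfl⟩ := List.mem_map.1 hl
    have hj : j < r + 1 := List.mem_range.1 hj
    refine Or.inl ⟨length_alternating .., alternating_odd_shape (fun x hx => ?_) (fun x hx => ?_)⟩
    all_goals rw [List.mem_range'_1] at hx
    · exact eq_true_of_lt_sq hc (by nlinarith)
    · exact eq_false_of_sq_le hc (by omega) (by nlinarith)
  · obtain ⟨x, hx, rfl⟩ := List.mem_map.1 hl
    rw [List.mem_range'_1] at hx
    exact Or.inr ⟨x, rfl, eq_false_of_sq_le hc (by omega) (by nlinarith)⟩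

lemma mem_optimalBins {l : List ℕ} (hl : l ∈ optimalBins r) :
    l.length = 2 * r + 1 ∧ (l.map c).IsChain (· ≠ ·) := by
  rcases List.mem_cons.1 hl with rfl | hl
  · refine ⟨length_alternating .., isChain_map_alternating_odd c true (fun x hx => ?_)
      (fun x hx => ?_)⟩
    all_goals rw [List.mem_range'_1] at hx
    · exact eq_true_of_lt_sq hc (by nlinarith)
    · exact eq_false_of_sq_le hc (by omega) (by nlinarith)
  · obtain ⟨j, hj, rfl⟩ := List.mem_map.1 hl
    have hj : j < r + 1 := List.mem_range.1 hj
    refine ⟨length_alternating .., isChain_map_alternating_odd c false (fun x hx => ?_)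
      (fun x hx => ?_)⟩
    all_goals rw [List.mem_range'_1] at hx
    · exact eq_false_of_sq_le hc (by omega) (by nlinarith)
    · exact eq_true_of_lt_sq hc (by nlinarith)

end Colouring

section Construction

variable {r : ℕ} (color : Fin ((r + 2) * (2 * r + 1)) → Bool)
  (hcolor : ∀ i, color i = decide (i.val < (r + 1) ^ 2))
include hcolor

theorem exists_optimal_packing :
    ∃ σ, IsPacking σ ∧ (∀ j, UBinOK color (2 * r + 1) (σ j)) ∧ openBins σ = r + 2 := by
  have hc : ∀ x < (r + 2) * (2 * r + 1), color (Fin.ofNat _ x) = decide (x < (r + 1) ^ 2) :=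
    fun x => apply_ofNat_of_forall_eq_decide hcolor
  have hlen : (optimalBins r).length ≤ (r + 2) * (2 * r + 1) := by
    rw [length_optimalBins]; nlinarith
  refine ⟨profileOfLists _ (optimalBins r),
    isPacking_profileOfLists hlen (flatten_optimalBins_perm r), fun j => ?_, ?_⟩
  · rcases profileOfLists_eq_nil_or j with h | ⟨l, hl, h⟩
    · rw [h]
      exact ubinOK_nil color _
    · obtain ⟨hlen, hchain⟩ := mem_optimalBins hc hl
      rw [h, ubinOK_map_ofNat]
      exact ⟨hchain, hlen.le⟩
  · rw [openBins_profileOfLists hlen, length_optimalBins]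
    intro hnil
    simpa using (mem_optimalBins hc hnil).1

theorem exists_equilibrium :
    ∃ σ, UNE color (2 * r + 1) σ ∧ openBins σ = 3 * r + 2 ∧
      ∀ l, σ l ≠ [] →
        ((σ l).length = 2 * r + 1 ∧ ((σ l).countP fun i => color i) = r + 1 ∧
          ((σ l).head?).map color = some true ∧ ((σ l).getLast?).map color = some true) ∨
        ∃ i, σ l = [i] ∧ color i = false := by
  have hc : ∀ x < (r + 2) * (2 * r + 1), color (Fin.ofNat _ x) = decide (x < (r + 1) ^ 2) :=
    fun x => apply_ofNat_of_forall_eq_decide hcolor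
  have hlen : (equilibriumBins r).length ≤ (r + 2) * (2 * r + 1) := by
    rw [length_equilibriumBins]; nlinarith
  set σ := profileOfLists ((r + 2) * (2 * r + 1)) (equilibriumBins r)
  have hshape : ∀ j, σ j = [] ∨
      (UBinOK color (2 * r + 1) (σ j) ∧ (σ j).length = 2 * r + 1 ∧
        ((σ j).countP fun i => color i) = r + 1 ∧
        ((σ j).head?).map color = some true ∧ ((σ j).getLast?).map color = some true) ∨
      ∃ i, σ j = [i] ∧ color i = false := by
    intro j
    rcases profileOfLists_eq_nil_or j with h | ⟨l, hl, h⟩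
    · exact Or.inl h
    rw [show σ j = _ from h]
    rcases mem_equilibriumBins hc hl with ⟨hlen, hchain, hcount, hhead, hlast⟩ | ⟨x, rfl, hx⟩
    · refine Or.inr (Or.inl ⟨ubinOK_map_ofNat.2 ⟨hchain, hlen.le⟩, ?_, ?_, ?_, ?_⟩)
      · rw [List.length_map, hlen]
      · rw [List.countP_map]; exact hcount
      · rw [List.head?_map, Option.map_map]; exact hhead
      · rw [List.getLast?_map, Option.map_map]; exact hlast
    · exact Or.inr (Or.inr ⟨_, rfl, hx⟩)
  have hfeas : ∀ j, UBinOK color (2 * r + 1) (σ j) := fun j => by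
    rcases hshape j with h | h | ⟨i, h, -⟩
    · rw [h]; exact ubinOK_nil color _
    · exact h.1
    · rw [h]; exact ⟨List.isChain_singleton _, by simp⟩
  refine ⟨σ, UNE_of_forall_full_or_singleton false
      (isPacking_profileOfLists hlen (flatten_equilibriumBins_perm r)) hfeas
      fun j => (hshape j).imp_right (Or.imp_left fun h => h.2.1), ?_,
    fun j hj => (hshape j).resolve_left hj |>.imp_left And.right⟩
  rw [openBins_profileOfLists hlen, length_equilibriumBins]
  intro hnil
  rcases mem_equilibriumBins hc hnil with h | ⟨x, h, -⟩ <;> simp at h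

end Construction

/-- Lower-bound construction for the price of anarchy of uniform black and white
games with `κ = k` odd.  With `n = k(k+3)/2` items, `(k+1)²/4` black (`true`)
and `(k²+4k-1)/4` white (`false`): (a) there is a feasible packing into
`(k+1)/2 + 1` bins and no feasible packing uses fewer bins; (b) there is a Nash
equilibrium with `(3k+1)/2` open bins, each open bin being either a full bin of
`k` items with `(k+1)/2` black items and black items at bottom and top, or a
singleton bin holding one white item. -/
theorem PoA_uniform_odd_construction (k : ℕ) (hk : Odd k)
    (color : Fin (k * (k + 3) / 2) → Bool)
    (hcolor : ∀ i, color i = decide (i.val < (k + 1) ^ 2 / 4)) :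
    ((∃ σ : Fin (k * (k + 3) / 2) → List (Fin (k * (k + 3) / 2)),
        IsPacking σ ∧ (∀ j, UBinOK color k (σ j)) ∧
        openBins σ = (k + 1) / 2 + 1) ∧
      (∀ τ : Fin (k * (k + 3) / 2) → List (Fin (k * (k + 3) / 2)),
        IsPacking τ → (∀ j, UBinOK color k (τ j)) →
        (k + 1) / 2 + 1 ≤ openBins τ)) ∧
    (∃ σ : Fin (k * (k + 3) / 2) → List (Fin (k * (k + 3) / 2)),
      UNE color k σ ∧ openBins σ = (3 * k + 1) / 2 ∧
      ∀ l, σ l ≠ [] →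
        ((σ l).length = k ∧ ((σ l).countP fun i => color i) = (k + 1) / 2 ∧
          ((σ l).head?).map color = some true ∧
          ((σ l).getLast?).map color = some true) ∨
        (∃ i, σ l = [i] ∧ color i = false)) := by
  obtain ⟨r, rfl⟩ := hk
  have hB : (2 * r + 1 + 1) ^ 2 / 4 = (r + 1) ^ 2 := by
    rw [show (2 * r + 1 + 1) ^ 2 = (r + 1) ^ 2 * 4 by ring, Nat.mul_div_cancel _ four_pos]
  have hN : (2 * r + 1) * (2 * r + 1 + 3) / 2 = (r + 2) * (2 * r + 1) := by
    rw [show (2 * r + 1) * (2 * r + 1 + 3) = (r + 2) * (2 * r + 1) * 2 by ring,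
      Nat.mul_div_cancel _ two_pos]
  rw [show (2 * r + 1 + 1) / 2 + 1 = r + 2 by omega, show (2 * r + 1 + 1) / 2 = r + 1 by omega,
    show (3 * (2 * r + 1) + 1) / 2 = 3 * r + 2 by omega]
  simp only [hB] at hcolor
  generalize hN' : (2 * r + 1) * (2 * r + 1 + 3) / 2 = N at color hcolor ⊢
  obtain rfl : N = (r + 2) * (2 * r + 1) := hN'.symm.trans hN
  refine ⟨⟨exists_optimal_packing color hcolor, fun τ hτ hfeas => ?_⟩,
    exists_equilibrium color hcolor⟩
  exact Nat.le_of_mul_le_mul_right (hτ.le_openBins_mul fun j => (hfeas j).2) (Nat.succ_pos _)
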